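/- arXiv:1511.06549 — 2 statements merged into one kernel-verified Lean document; each statement's English description precedes it below -/
import Mathlib

section
/- Consider a biinfinite inverse sequence of groups 𝒢 = (G_n, φ_n : G_n → G_{n-1})_{n ∈ ℤ} which is rigid, meaning: for all m ≥ 1 and all n ∈ ℤ there exist isomorphisms ψ_k : G_k → G_{n+k} for 0 ≤ k ≤ m making all squares ψ_{k-1} ∘ φ_k = φ_{n+k} ∘ ψ_k commute. Define F_0 := G_0 and F_n := im(φ_1 ∘ … ∘ φ_n) for n ≥ 1. If F_n = F_{n+1} for some n ≥ 0, then F_m = F_n for all m ≥ n. -/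
variable {G : ℤ → Type*} [∀ n, Group (G n)]

/-- Transport a group along an equality of indices. -/
def castHom {G : ℤ → Type*} [∀ n, Group (G n)] {a b : ℤ} (h : a = b) : G a →* G b := by
  subst h; exact MonoidHom.id _

/-- The composite bonding homomorphism `G (n + m) →* G n` of the inverse
sequence with bonding maps `φ k : G (k+1) →* G k`. -/
def chain (φ : ∀ n : ℤ, G (n + 1) →* G n) (n : ℤ) : (m : ℕ) → G (n + m) →* G n
  | 0 => castHom (by simp)
  | (m + 1) => (chain φ n m).comp ((φ (n + m)).comp (castHom (by push_cast; ring)))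

/-- `F n` is the image of `G n` in `G 0` under the composite bonding map. -/
def F (φ : ∀ n : ℤ, G (n + 1) →* G n) (n : ℕ) : Subgroup (G 0) :=
  (chain φ 0 n).range

/-- Rigidity of a biinfinite inverse sequence of groups: for every `m ≥ 1` and every `n ∈ ℤ`,
the segment `G 0 ← G 1 ← ⋯ ← G m` is isomorphic, via vertical isomorphisms commuting with the
bonding maps, to the segment `G n ← G (n+1) ← ⋯ ← G (n+m)`. -/
def Rigid (φ : ∀ n : ℤ, G (n + 1) →* G n) : Prop :=
  ∀ m : ℕ, 1 ≤ m → ∀ n : ℤ,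
    ∃ ψ : ∀ k : ℕ, k ≤ m → (G (k : ℤ) ≃* G (n + (k : ℤ))),
      ∀ (k : ℕ) (hk : k + 1 ≤ m) (x : G ((k : ℤ) + 1)),
        ψ k (Nat.le_of_succ_le hk) (φ (k : ℤ) x) =
          φ (n + (k : ℤ))
            (castHom (by push_cast; ring)
              (ψ (k + 1) hk (castHom (by push_cast; ring) x)))

@[simp] lemma castHom_castHom {a b c : ℤ} (h1 : a = b) (h2 : b = c) (x : G a) :
    castHom h2 (castHom h1 x) = castHom (h1.trans h2) x := by subst h1; subst h2; rfl
@[simp] lemma castHom_refl {a : ℤ} (h : a = a) (x : G a) : castHom h x = x := rfl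
lemma phi_castHom (φ : ∀ n : ℤ, G (n + 1) →* G n) {a b : ℤ} (h : a = b)
    (h' : a + 1 = b + 1) (x : G (a + 1)) :
    φ b (castHom h' x) = castHom h (φ a x) := by subst h; rfl

lemma chain_castHom (φ : ∀ n : ℤ, G (n + 1) →* G n) {a b : ℤ} (h : a = b) (m : ℕ)
    (h' : a + m = b + m) (x : G (a + m)) :
    chain φ b m (castHom h' x) = castHom h (chain φ a m x) := by subst h; rfl

lemma chain_zero (φ : ∀ n : ℤ, G (n + 1) →* G n) (n : ℤ) (x : G (n + ((0:ℕ):ℤ))) :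
    chain φ n 0 x = castHom (by simp) x := rfl

lemma chain_succ (φ : ∀ n : ℤ, G (n + 1) →* G n) (n : ℤ) (m : ℕ)
    (x : G (n + ((m + 1 : ℕ) : ℤ))) :
    chain φ n (m + 1) x = chain φ n m (φ (n + m) (castHom (by push_cast; ring) x)) := rfl

lemma chain_left (φ : ∀ n : ℤ, G (n + 1) →* G n) (n : ℤ) : ∀ (j : ℕ)
    (x : G (n + ((j + 1 : ℕ) : ℤ))),
    chain φ n (j + 1) x = φ n (chain φ (n + 1) j (castHom (by push_cast; ring) x))
  | 0, x => by
    rw [chain_succ, chain_zero, chain_zero]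
    simp only [castHom_castHom]
    rw [← castHom_castHom (show n + ((0+1:ℕ):ℤ) = n + 1 by push_cast; ring)
      (show n + 1 = n + ((0:ℕ):ℤ) + 1 by push_cast; ring) x]
    rw [phi_castHom φ (show n = n + ((0:ℕ):ℤ) by push_cast; ring)]
    simp
  | (j+1), x => by
    rw [chain_succ, chain_left φ n j, chain_succ]
    congr 1
    rw [← castHom_castHom (show n + ((j+1+1:ℕ):ℤ) = (n + 1 + (j:ℤ)) + 1 by push_cast; ring)
      (show (n + 1 + (j:ℤ)) + 1 = n + ((j+1:ℕ):ℤ) + 1 by push_cast; ring) x]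
    rw [phi_castHom φ (show n + 1 + (j:ℤ) = n + ((j+1:ℕ):ℤ) by push_cast; ring)]
    simp only [castHom_castHom]
    rfl

lemma key_square (φ : ∀ n : ℤ, G (n + 1) →* G n) (m : ℕ)
    (ψ : ∀ k : ℕ, k ≤ m → (G (k : ℤ) ≃* G (1 + (k : ℤ))))
    (hψ : ∀ (k : ℕ) (hk : k + 1 ≤ m) (x : G ((k : ℤ) + 1)),
        ψ k (Nat.le_of_succ_le hk) (φ (k : ℤ) x) =
          φ (1 + (k : ℤ)) (castHom (by push_cast; ring)
              (ψ (k + 1) hk (castHom (by push_cast; ring) x)))) :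
    ∀ (j : ℕ) (hj : j ≤ m) (x : G ((j : ℕ) : ℤ)),
      ψ 0 m.zero_le (chain φ 0 j (castHom (by simp) x)) =
        castHom (by norm_num) (chain φ 1 j (ψ j hj x))
  | 0, hj, x => by
    rw [chain_zero, chain_zero]
    simp only [castHom_castHom, castHom_refl]
  | (j+1), hj, x => by
    rw [chain_succ, chain_succ]
    simp only [castHom_castHom]
    rw [← castHom_castHom (show ((j+1:ℕ):ℤ) = (j:ℤ)+1 by push_cast; ring)
      (show (j:ℤ)+1 = (0+(j:ℤ))+1 by ring) x]
    rw [phi_castHom φ (show ((j:ℕ):ℤ) = 0+(j:ℤ) by ring)]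
    rw [key_square φ m ψ hψ j (Nat.le_of_succ_le hj)]
    rw [hψ j hj]
    simp only [castHom_castHom, castHom_refl]

lemma chain_left' (φ : ∀ n : ℤ, G (n + 1) →* G n) (j : ℕ) (x : G ((0:ℤ) + ((j + 1 : ℕ) : ℤ))) :
    chain φ 0 (j + 1) x =
      φ 0 (castHom (show (1:ℤ) = 0 + 1 by ring)
        (chain φ 1 j (castHom (by push_cast; ring) x))) := by
  rw [chain_left]
  rw [← castHom_castHom (show (0:ℤ) + ((j+1:ℕ):ℤ) = 1 + (j:ℤ) by push_cast; ring)
    (show (1:ℤ) + (j:ℤ) = (0 + 1) + (j:ℤ) by ring) x]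
  rw [chain_castHom φ (show (1:ℤ) = 0 + 1 by ring)]
  simp only [castHom_castHom]

lemma F_succ (φ : ∀ n : ℤ, G (n + 1) →* G n) (m : ℕ)
    (ψ : ∀ k : ℕ, k ≤ m → (G (k : ℤ) ≃* G (1 + (k : ℤ))))
    (hψ : ∀ (k : ℕ) (hk : k + 1 ≤ m) (x : G ((k : ℤ) + 1)),
        ψ k (Nat.le_of_succ_le hk) (φ (k : ℤ) x) =
          φ (1 + (k : ℤ)) (castHom (by push_cast; ring)
              (ψ (k + 1) hk (castHom (by push_cast; ring) x))))
    (j : ℕ) (hj : j ≤ m) :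
    F φ (j + 1) = (F φ j).map
      (((φ 0).comp (castHom (show (1:ℤ) + ((0:ℕ):ℤ) = 0 + 1 by norm_num))).comp
        (ψ 0 m.zero_le).toMonoidHom) := by
  apply le_antisymm
  · rintro y ⟨x, rfl⟩
    refine ⟨chain φ 0 j (castHom (by simp)
      ((ψ j hj).symm (castHom (by push_cast; ring) x))), ⟨_, rfl⟩, ?_⟩
    simp only [MonoidHom.comp_apply, MulEquiv.coe_toMonoidHom]
    rw [key_square φ m ψ hψ j hj, MulEquiv.apply_symm_apply, chain_left']
    simp only [castHom_castHom]
  · rintro y ⟨w, ⟨u, rfl⟩, rfl⟩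
    refine ⟨castHom (by push_cast; ring) (ψ j hj (castHom (by simp) u)), ?_⟩
    rw [chain_left']
    have hu : u = castHom (show ((j:ℕ):ℤ) = 0 + (j:ℤ) by simp)
        (castHom (show (0:ℤ) + (j:ℤ) = ((j:ℕ):ℤ) by simp) u) := by simp
    conv_rhs => rw [hu]
    simp only [MonoidHom.comp_apply, MulEquiv.coe_toMonoidHom]
    rw [key_square φ m ψ hψ j hj]
    simp only [castHom_castHom]
    rfl

theorem F_stabilizes_of_rigid (φ : ∀ n : ℤ, G (n + 1) →* G n) (hr : Rigid φ)
    (n : ℕ) (h : F φ n = F φ (n + 1)) :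
    ∀ m : ℕ, n ≤ m → F φ m = F φ n := by
  intro m hm
  induction m with
  | zero =>
    obtain rfl : n = 0 := Nat.le_zero.mp hm
    rfl
  | succ m ih =>
    rcases Nat.lt_or_ge n (m + 1) with hn | hn
    · have hn' : n ≤ m := Nat.lt_succ_iff.mp hn
      obtain ⟨ψ, hψ⟩ := hr (m + 1) (Nat.le_add_left 1 m) 1
      rw [F_succ φ (m + 1) ψ hψ m (Nat.le_succ m), ih hn',
        ← F_succ φ (m + 1) ψ hψ n (le_trans hn' (Nat.le_succ m)), ← h]
    · obtain rfl : n = m + 1 := le_antisymm hm hn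
      rfl
end

section
/- Every finitely generated residually finite group is Hopfian. -/
/-- A group is residually finite if every nontrivial element admits a homomorphism to some
finite group under which it stays nontrivial. -/
def ResiduallyFinite (G : Type*) [Group G] : Prop :=
  ∀ g : G, g ≠ 1 → ∃ (H : Type) (_ : Group H) (_ : Finite H) (φ : G →* H), φ g ≠ 1

/-- A group is Hopfian if every surjective endomorphism is injective. -/
def Hopfian (G : Type*) [Group G] : Prop :=
  ∀ φ : G →* G, Function.Surjective φ → Function.Injective φ

lemma finite_hom_of_fg {G H : Type*} [Group G] [Group H] (hfg : Group.FG G) [Finite H] :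
    Finite (G →* H) := by
  obtain ⟨S, hS⟩ := hfg
  have : Function.Injective (fun (f : G →* H) (s : S) => f s.1) := by
    intro f g h
    refine MonoidHom.eq_of_eqOn_dense hS ?_
    intro x hx
    exact congrFun h ⟨x, hx⟩
  exact Finite.of_injective _ this

/-- Malcev's theorem. -/
theorem hopfian_of_fg_residuallyFinite (G : Type*) [Group G] (hfg : Group.FG G)
    (hrf : ResiduallyFinite G) : Hopfian G := by
  intro φ hsurj
  rw [← MonoidHom.ker_eq_bot_iff, eq_bot_iff]
  intro g hg
  by_contra hne
  obtain ⟨H, _, _, ψ, hψ⟩ := hrf g hne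
  have : Finite (G →* H) := finite_hom_of_fg hfg
  have hT : Function.Injective (fun α : G →* H => α.comp φ) := by
    intro α β h
    ext x
    obtain ⟨y, rfl⟩ := hsurj x
    exact congrArg (fun f : G →* H => f y) h
  obtain ⟨α, hα⟩ := Finite.injective_iff_surjective.mp hT ψ
  have : ψ g = 1 := by
    rw [← hα]
    simpa using congrArg α (Subgroup.mem_bot.mp (by exact_mod_cast hg) ▸ rfl : φ g = 1)
  exact hψ this
end
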